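/- Let f : ℝⁿ → ℝⁿ be continuously differentiable with Jacobian Df(x), let λ ≥ 0, ε ≥ 0, and let P be a real symmetric n×n matrix such that Df(x)ᵀP + P·Df(x) ⪯ −2λP − εI for all x ∈ ℝⁿ. Let x, y : [0,∞) → ℝⁿ be differentiable with x′(t) = f(x(t)) and y′(t) = f(y(t)) for all t ≥ 0, and suppose (x(0)−y(0))ᵀP(x(0)−y(0)) ≤ 0. Then (x(t)−y(t))ᵀP(x(t)−y(t)) ≤ 0 for all t ≥ 0; that is, the cone K⁻ = { z : zᵀPz ≤ 0 } is forward invariant for differences of solutions. -/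

import Mathlib

open Matrix

/-- `M ⪯ N` iff `N - M` is positive semidefinite. -/
def matLE {m : Type*} [Fintype m] (M N : Matrix m m ℝ) : Prop := (N - M).PosSemidef

/-- A real symmetric matrix has inertia `p`: exactly `p` negative eigenvalues,
`card m − p` positive eigenvalues, and no zero eigenvalues, counted with multiplicity
(as roots of the characteristic polynomial). -/
def hasInertia {m : Type*} [Fintype m] [DecidableEq m]
    (P : Matrix m m ℝ) (p : ℕ) : Prop :=
  Multiset.countP (fun μ : ℝ => μ < 0) P.charpoly.roots = p ∧
  Multiset.countP (fun μ : ℝ => 0 < μ) P.charpoly.roots = Fintype.card m - p ∧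
  (0 : ℝ) ∉ P.charpoly.roots

/-- Number of complex eigenvalues (with algebraic multiplicity) of a real matrix
with strictly positive real part. -/
noncomputable def posReCount {m : Type*} [Fintype m] [DecidableEq m]
    (A : Matrix m m ℝ) : ℕ :=
  Multiset.countP (fun μ : ℂ => 0 < μ.re) (A.map Complex.ofReal).charpoly.roots

/-- Number of complex eigenvalues (with algebraic multiplicity) of a real matrix
with strictly negative real part. -/
noncomputable def negReCount {m : Type*} [Fintype m] [DecidableEq m]
    (A : Matrix m m ℝ) : ℕ :=
  Multiset.countP (fun μ : ℂ => μ.re < 0) (A.map Complex.ofReal).charpoly.roots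

/-- The quadratic form `xᵀ P x`. -/
def quadForm {m : Type*} [Fintype m] (P : Matrix m m ℝ) (x : m → ℝ) : ℝ :=
  x ⬝ᵥ P.mulVec x

/-- Euclidean norm on `m → ℝ`. -/
noncomputable def enorm {m : Type*} [Fintype m] (x : m → ℝ) : ℝ :=
  Real.sqrt (x ⬝ᵥ x)

/-- `J` is the Jacobian of `f`. -/
def IsJacobianOf {n : ℕ} (J : (Fin n → ℝ) → Matrix (Fin n) (Fin n) ℝ)
    (f : (Fin n → ℝ) → (Fin n → ℝ)) : Prop :=
  ∀ x, HasFDerivAt f (LinearMap.toContinuousLinearMap ((J x).mulVecLin)) x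

/-!
Along the difference `z = x - y` of two solutions, `V = zᵀ P z` has derivative
`2 zᵀ P (f x - f y)`. The mean value theorem along the segment from `y` to `x`, with the matrix
inequality at every point of it, bounds this by `-2λ V`; Grönwall then gives `V(t) ≤ V(0) e^{-2λt}`.
-/

section

variable {ι : Type*} [Fintype ι]

theorem HasDerivAt.dotProduct {a b : ℝ → ι → ℝ} {a' b' : ι → ℝ} {t : ℝ}
    (ha : HasDerivAt a a' t) (hb : HasDerivAt b b' t) :
    HasDerivAt (fun s => a s ⬝ᵥ b s) (a' ⬝ᵥ b t + a t ⬝ᵥ b') t := by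
  unfold _root_.dotProduct
  simp only [← Finset.sum_add_distrib]
  exact HasDerivAt.fun_sum fun i _ => (hasDerivAt_pi.mp ha i).mul (hasDerivAt_pi.mp hb i)

theorem HasDerivAt.const_mulVec {κ : Type*} [Fintype κ] (P : Matrix κ ι ℝ)
    {b : ℝ → ι → ℝ} {b' : ι → ℝ} {t : ℝ} (hb : HasDerivAt b b' t) :
    HasDerivAt (fun s => P *ᵥ b s) (P *ᵥ b') t :=
  (P.mulVecLin.toContinuousLinearMap.hasFDerivAt (x := b t)).comp_hasDerivAt t hb

theorem Matrix.IsSymm.dotProduct_mulVec_comm {P : Matrix ι ι ℝ} (hP : P.IsSymm) (a b : ι → ℝ) :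
    a ⬝ᵥ P *ᵥ b = b ⬝ᵥ P *ᵥ a := by
  rw [dotProduct_mulVec, dotProduct_comm, ← vecMul_transpose, hP.eq]

theorem HasDerivAt.quadForm {P : Matrix ι ι ℝ} (hP : P.IsSymm) {z : ℝ → ι → ℝ} {z' : ι → ℝ}
    {t : ℝ} (hz : HasDerivAt z z' t) :
    HasDerivAt (fun s => quadForm P (z s)) (2 * (z t ⬝ᵥ P *ᵥ z')) t := by
  refine (hz.dotProduct (hz.const_mulVec P)).congr_deriv ?_
  rw [hP.dotProduct_mulVec_comm z']
  ring

theorem dotProduct_mulVec_mulVec_le_of_matLE [DecidableEq ι]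
    {P A : Matrix ι ι ℝ} (hP : P.IsSymm) {lam eps : ℝ} (heps : 0 ≤ eps)
    (h : matLE (Aᵀ * P + P * A) (-((2 * lam) • P) - eps • (1 : Matrix ι ι ℝ))) (z : ι → ℝ) :
    z ⬝ᵥ P *ᵥ (A *ᵥ z) ≤ -lam * quadForm P z := by
  have hpsd := h.dotProduct_mulVec_nonneg z
  have hsymm : z ⬝ᵥ Aᵀ *ᵥ (P *ᵥ z) = z ⬝ᵥ P *ᵥ (A *ᵥ z) := by
    rw [dotProduct_mulVec, vecMul_transpose, hP.dotProduct_mulVec_comm]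
  simp only [star_trivial, sub_mulVec, add_mulVec, neg_mulVec, smul_mulVec, one_mulVec,
    dotProduct_sub, dotProduct_add, dotProduct_neg, dotProduct_smul, smul_eq_mul,
    ← mulVec_mulVec, hsymm] at hpsd
  have hzz : 0 ≤ z ⬝ᵥ z := Finset.sum_nonneg fun i _ => mul_self_nonneg (z i)
  unfold quadForm
  nlinarith [mul_nonneg heps hzz]

theorem dotProduct_mulVec_sub_le_of_hasFDerivAt {f : (ι → ℝ) → ι → ℝ} {J : (ι → ℝ) → Matrix ι ι ℝ}
    (hJ : ∀ x, HasFDerivAt f (LinearMap.toContinuousLinearMap (J x).mulVecLin) x)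
    {P : Matrix ι ι ℝ} {w : ι → ℝ} {c : ℝ} (hbound : ∀ x, w ⬝ᵥ P *ᵥ (J x *ᵥ w) ≤ c)
    (b : ι → ℝ) :
    w ⬝ᵥ P *ᵥ (f (b + w) - f b) ≤ c := by
  have hg : ∀ s : ℝ, HasDerivAt (fun s : ℝ => w ⬝ᵥ P *ᵥ f (b + s • w))
      (w ⬝ᵥ P *ᵥ (J (b + s • w) *ᵥ w)) s := by
    intro s
    have hline : HasDerivAt (fun s : ℝ => b + s • w) w s := by
      simpa using ((hasDerivAt_id s).smul_const w).const_add b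
    simpa using (hasDerivAt_const s w).dotProduct
      (((hJ _).comp_hasDerivAt s hline).const_mulVec P)
  have := image_sub_le_mul_sub_of_deriv_le (fun s => (hg s).differentiableAt)
    (fun s => (hg s).deriv ▸ hbound _) zero_le_one
  simpa [mulVec_sub] using this

end

theorem nonpos_of_hasDerivAt_le_mul_self {V V' : ℝ → ℝ} {K : ℝ}
    (hV : ∀ t, 0 ≤ t → HasDerivAt V (V' t) t) (hbound : ∀ t, 0 ≤ t → V' t ≤ K * V t)
    (h0 : V 0 ≤ 0) (t : ℝ) (ht : 0 ≤ t) : V t ≤ 0 := by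
  have := le_gronwallBound_of_liminf_deriv_right_le (δ := 0) (K := K) (ε := 0) (b := t)
    (fun s hs => (hV s hs.1).continuousAt.continuousWithinAt)
    (fun s hs _ hr => (hV s hs.1).hasDerivWithinAt.liminf_right_slope_le hr) h0
    (fun s hs => by simpa using hbound s hs.1) t ⟨ht, le_rfl⟩
  rwa [gronwallBound_ε0_δ0] at this

theorem cone_forward_invariant_for_differences_general {n : ℕ}
    (f : (Fin n → ℝ) → (Fin n → ℝ)) (J : (Fin n → ℝ) → Matrix (Fin n) (Fin n) ℝ)
    (hJ : IsJacobianOf J f)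
    (P : Matrix (Fin n) (Fin n) ℝ) (hPsymm : P.IsSymm)
    (lam eps : ℝ) (heps : 0 ≤ eps)
    (hLMI : ∀ x : Fin n → ℝ, matLE ((J x)ᵀ * P + P * J x)
      (-((2 * lam) • P) - eps • (1 : Matrix (Fin n) (Fin n) ℝ)))
    (x y : ℝ → Fin n → ℝ)
    (hx : ∀ t : ℝ, 0 ≤ t → HasDerivAt x (f (x t)) t)
    (hy : ∀ t : ℝ, 0 ≤ t → HasDerivAt y (f (y t)) t)
    (h0 : quadForm P (x 0 - y 0) ≤ 0) :
    ∀ t : ℝ, 0 ≤ t → quadForm P (x t - y t) ≤ 0 := by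
  refine nonpos_of_hasDerivAt_le_mul_self (K := -2 * lam)
    (V' := fun t => 2 * ((x t - y t) ⬝ᵥ P *ᵥ (f (x t) - f (y t))))
    (fun t ht => ((hx t ht).sub (hy t ht)).quadForm hPsymm) (fun t _ => ?_) h0
  have hincr := dotProduct_mulVec_sub_le_of_hasFDerivAt hJ
    (fun u => dotProduct_mulVec_mulVec_le_of_matLE hPsymm heps (hLMI u) (x t - y t)) (y t)
  rw [add_sub_cancel] at hincr
  linarith

/-- the cone K⁻ = {z : zᵀPz ≤ 0} is forward invariant for the
difference of two solutions. -/
theorem cone_forward_invariant_for_differences {n : ℕ}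
    (f : (Fin n → ℝ) → (Fin n → ℝ)) (J : (Fin n → ℝ) → Matrix (Fin n) (Fin n) ℝ)
    (hf : ContDiff ℝ 1 f) (hJ : IsJacobianOf J f)
    (P : Matrix (Fin n) (Fin n) ℝ) (hPsymm : P.IsSymm)
    (lam eps : ℝ) (hlam : 0 ≤ lam) (heps : 0 ≤ eps)
    (hLMI : ∀ x : Fin n → ℝ, matLE ((J x)ᵀ * P + P * J x)
      (-((2 * lam) • P) - eps • (1 : Matrix (Fin n) (Fin n) ℝ)))
    (x y : ℝ → Fin n → ℝ)
    (hx : ∀ t : ℝ, 0 ≤ t → HasDerivAt x (f (x t)) t)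
    (hy : ∀ t : ℝ, 0 ≤ t → HasDerivAt y (f (y t)) t)
    (h0 : quadForm P (x 0 - y 0) ≤ 0) :
    ∀ t : ℝ, 0 ≤ t → quadForm P (x t - y t) ≤ 0 :=
  cone_forward_invariant_for_differences_general f J hJ P hPsymm lam eps heps hLMI x y hx hy h0
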